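/- In a monotone submodular HGCRP instance, if in partition π some agent i strictly benefits from moving to an existing coalition C ∈ π with |C| < κ (i.e., U(C ∪ {i}) > U(π(i))), then ψ(π_{C∪{i}}) is lexicographically strictly greater than ψ(π), where π_{C∪{i}} is the partition after the move and ψ sorts all agent utilities in non-increasing order. -/

import Mathlib

open Finset

def IsPartitionMap {N : Type*} (P : N → Finset N) : Prop :=
  (∀ i, i ∈ P i) ∧ (∀ i j, j ∈ P i → P j = P i)

noncomputable def psi {N : Type*} [Fintype N] (U : Finset N → ℝ) (P : N → Finset N) :
    List ℝ :=
  (Finset.univ.toList.map fun i => U (P i)).insertionSort (fun a b => b ≤ a)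

/-- The partition resulting from agent `i` moving to coalition `C`. -/
def moveTo {N : Type*} [DecidableEq N] (P : N → Finset N) (i : N) (C : Finset N) :
    N → Finset N :=
  fun a => if a ∈ insert i C then insert i C else (P a).erase i

/-!
Let `v = U (C ∪ {i})`. Every agent whose utility is at least `v` is no worse off after the move:
members of `C` gain by monotonicity, and the only agents who can lose are those of `π(i)`, whose
utility `U (π(i))` is below `v`. Agent `i` itself rises from below `v` to `v`. Hence for every
threshold `t ≥ v` the number of agents with utility `≥ t` does not decrease, and it strictly
increases at `t = v`; for two non-increasing sequences this forces the lexicographic increase.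
-/

namespace List

variable {α : Type*} [LinearOrder α]

theorem countP_le_eq_zero_of_head_lt {b t : α} {l : List α} (hl : (b :: l).Pairwise (· ≥ ·))
    (hbt : b < t) : (b :: l).countP (t ≤ ·) = 0 := by
  rw [countP_eq_zero]
  intro x hx
  have hxb : x ≤ b := by
    rcases mem_cons.mp hx with rfl | hx
    · exact le_rfl
    · exact (pairwise_cons.mp hl).1 x hx
  simpa using hxb.trans_lt hbt

theorem lex_lt_of_countP_le {l₁ l₂ : List α} (v : α)
    (h₁ : l₁.Pairwise (· ≥ ·)) (h₂ : l₂.Pairwise (· ≥ ·))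
    (hle : ∀ t, v ≤ t → l₁.countP (t ≤ ·) ≤ l₂.countP (t ≤ ·))
    (hlt : l₁.countP (v ≤ ·) < l₂.countP (v ≤ ·)) :
    Lex (· < ·) l₁ l₂ := by
  induction l₁ generalizing l₂ with
  | nil =>
    cases l₂ with
    | nil => simp at hlt
    | cons b l₂ => exact Lex.nil
  | cons a l₁ ih =>
    cases l₂ with
    | nil => simp at hlt
    | cons b l₂ =>
      rcases lt_trichotomy a b with hab | rfl | hba
      · exact Lex.rel hab
      · refine Lex.cons (ih (pairwise_cons.mp h₁).2 (pairwise_cons.mp h₂).2 (fun t ht => ?_) ?_)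
        · by_cases hta : t ≤ a <;> simpa [countP_cons, hta] using hle t ht
        · by_cases hva : v ≤ a <;> simpa [countP_cons, hva] using hlt
      · exfalso
        -- Above the head `b`, the second list has no entries at all.
        rcases le_or_gt v a with hva | hav
        · have h := hle a hva
          rw [countP_le_eq_zero_of_head_lt h₂ hba] at h
          simp at h
        · rw [countP_le_eq_zero_of_head_lt h₂ (hba.trans hav)] at hlt
          exact Nat.not_lt_zero _ hlt

end List

section Psi

variable {N : Type*} [Fintype N]

theorem pairwise_psi (U : Finset N → ℝ) (P : N → Finset N) : (psi U P).Pairwise (· ≥ ·) :=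
  List.pairwise_insertionSort _ _

theorem countP_psi (U : Finset N → ℝ) (P : N → Finset N) (t : ℝ) :
    (psi U P).countP (t ≤ ·) = #{a | t ≤ U (P a)} := by
  classical
  rw [psi, (List.perm_insertionSort _ _).countP_eq, List.countP_map]
  have h := (nodup_toList univ).card_eq_countP (P := fun a => t ≤ U (P a))
  rw [toList_toFinset] at h
  exact h.symm

theorem psi_lex_lt_of_le_above (U : Finset N → ℝ) {P Q : N → Finset N} (v : ℝ)
    (hle : ∀ a, v ≤ U (P a) → U (P a) ≤ U (Q a))
    (hlt : ∃ a, U (P a) < v ∧ v ≤ U (Q a)) :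
    List.Lex (· < ·) (psi U P) (psi U Q) := by
  classical
  refine List.lex_lt_of_countP_le v (pairwise_psi U P) (pairwise_psi U Q) (fun t ht => ?_) ?_
  · rw [countP_psi, countP_psi]
    refine card_le_card fun a ha => ?_
    simp only [mem_filter_univ] at ha ⊢
    exact ha.trans (hle a (ht.trans ha))
  · rw [countP_psi, countP_psi]
    obtain ⟨i, hPi, hQi⟩ := hlt
    refine card_lt_card (ssubset_iff_of_subset (fun a ha => ?_) |>.mpr ⟨i, ?_, ?_⟩)
    · simp only [mem_filter_univ] at ha ⊢
      exact ha.trans (hle a ha)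
    · simpa using hQi
    · simpa using hPi

end Psi

section MoveTo

variable {N : Type*} [DecidableEq N]

theorem moveTo_of_mem {P : N → Finset N} {i a : N} {C : Finset N} (ha : a ∈ insert i C) :
    moveTo P i C a = insert i C :=
  if_pos ha

theorem moveTo_of_notMem {P : N → Finset N} {i a : N} {C : Finset N} (ha : a ∉ insert i C) :
    moveTo P i C a = (P a).erase i :=
  if_neg ha

theorem utility_le_moveTo_of_le {U : Finset N → ℝ} (hmono : Monotone U) {P : N → Finset N}
    (hP : IsPartitionMap P) {i : N} {C : Finset N} (hC : ∃ j, C = P j)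
    (hben : U (P i) < U (insert i C)) {a : N} (ha : U (insert i C) ≤ U (P a)) :
    U (P a) ≤ U (moveTo P i C a) := by
  by_cases haC : a ∈ insert i C
  · rw [moveTo_of_mem haC]
    rcases mem_insert.mp haC with rfl | haC
    · exact hben.le
    · obtain ⟨j, rfl⟩ := hC
      rw [hP.2 j a haC]
      exact hmono (subset_insert _ _)
  · rw [moveTo_of_notMem haC]
    by_cases hia : i ∈ P a
    · -- `a` shares the mover's old coalition, whose utility is below `U (insert i C)`.
      rw [hP.2 a i hia] at hben
      exact absurd ha hben.not_ge
    · rw [erase_eq_of_notMem hia]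

end MoveTo

theorem psi_lt_of_beneficial_move_general {N : Type*} [DecidableEq N] [Fintype N]
    (U : Finset N → ℝ)
    (hmono : ∀ X Y : Finset N, X ⊆ Y → U X ≤ U Y)
    (P : N → Finset N) (hP : IsPartitionMap P)
    (i : N) (C : Finset N) (hCmem : ∃ j, C = P j)
    (hben : U (P i) < U (insert i C)) :
    List.Lex (· < ·) (psi U P) (psi U (moveTo P i C)) := by
  refine psi_lex_lt_of_le_above U (U (insert i C))
    (fun a ha => utility_le_moveTo_of_le (fun _ _ => hmono _ _) hP hCmem hben ha) ⟨i, hben, ?_⟩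
  rw [moveTo_of_mem (mem_insert_self i C)]

/-- in a monotone submodular HGCRP instance, if agent `i` strictly
benefits from moving to an existing coalition `C ∈ π` with `|C| < κ`, then
`ψ(π_{C ∪ {i}})` is lexicographically strictly greater than `ψ(π)`. -/
theorem psi_lt_of_beneficial_move {N : Type*} [DecidableEq N] [Fintype N]
    (U : Finset N → ℝ) (κ : ℕ)
    (hmono : ∀ X Y : Finset N, X ⊆ Y → U X ≤ U Y)
    (hsub : ∀ (X Y : Finset N) (x : N), X ⊆ Y → x ∉ Y →
      U (insert x Y) - U Y ≤ U (insert x X) - U X)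
    (hempty : U ∅ = 0)
    (P : N → Finset N) (hP : IsPartitionMap P)
    (i : N) (C : Finset N) (hCmem : ∃ j, C = P j) (hiC : i ∉ C)
    (hcard : C.card < κ) (hben : U (P i) < U (insert i C)) :
    List.Lex (· < ·) (psi U P) (psi U (moveTo P i C)) :=
  psi_lt_of_beneficial_move_general U hmono P hP i C hCmem hben
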